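/- For every prime p > 5, the quantity (p−1)(p²−35p+346)/2880 − ε₁/16 − ε₂/4 − 2ε₃/9 − ε₅/5 is a nonnegative integer, where ε₁ = 1 iff p ≡ 3 (mod 4), ε₂ = 1 iff p ≡ 5 or 7 (mod 8), ε₃ = 1 iff p ≡ 2 (mod 3), ε₅ = 1 iff p ≡ 4 (mod 5) (each 0 otherwise). -/
import Mathlib

lemma key64' : ∀ r : ZMod 64, r.val % 2 = 1 →
    (r-1)*(r^2-35*r+346) - 180*(if r.val%4=3 then 1 else 0)
      - 720*(if r.val%8=5 ∨ r.val%8=7 then 1 else 0) = 0 := by decide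

lemma key9' : ∀ r : ZMod 9, r.val % 3 ≠ 0 →
    (r-1)*(r^2-35*r+346) - 640*(if r.val%3=2 then 1 else 0) = 0 := by decide

lemma key5' : ∀ r : ZMod 5, r.val % 5 ≠ 0 →
    (r-1)*(r^2-35*r+346) - 576*(if r.val%5=4 then 1 else 0) = 0 := by decide

set_option maxHeartbeats 1600000 in
theorem stmt12 (p : ℕ) (hp : p.Prime) (hp5 : 5 < p)
    (e1 e2 e3 e5 : ℤ)
    (he1 : e1 = if p % 4 = 3 then 1 else 0)
    (he2 : e2 = if p % 8 = 5 ∨ p % 8 = 7 then 1 else 0)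
    (he3 : e3 = if p % 3 = 2 then 1 else 0)
    (he5 : e5 = if p % 5 = 4 then 1 else 0) :
    2880 ∣ ((p : ℤ) - 1) * ((p : ℤ) ^ 2 - 35 * p + 346)
        - 180 * e1 - 720 * e2 - 640 * e3 - 576 * e5 ∧
      0 ≤ ((p : ℤ) - 1) * ((p : ℤ) ^ 2 - 35 * p + 346)
        - 180 * e1 - 720 * e2 - 640 * e3 - 576 * e5 := by
  subst he1 he2 he3 he5
  have hp2 : p % 2 = 1 := by
    rcases hp.eq_two_or_odd with h | h <;> omega
  have hp3 : p % 3 ≠ 0 := by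
    intro h
    have : (3 : ℕ) ∣ p := by omega
    rcases (Nat.Prime.eq_one_or_self_of_dvd hp 3 this) with h' | h' <;> omega
  have hp5' : p % 5 ≠ 0 := by
    intro h
    have : (5 : ℕ) ∣ p := by omega
    rcases (Nat.Prime.eq_one_or_self_of_dvd hp 5 this) with h' | h' <;> omega
  have hd64 : (64:ℤ) ∣ ((p : ℤ) - 1) * ((p : ℤ) ^ 2 - 35 * p + 346)
      - 180 * (if p % 4 = 3 then (1:ℤ) else 0)
      - 720 * (if p % 8 = 5 ∨ p % 8 = 7 then (1:ℤ) else 0)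
      - 640 * (if p % 3 = 2 then (1:ℤ) else 0)
      - 576 * (if p % 5 = 4 then (1:ℤ) else 0) := by
    rw [show (64:ℤ) = ((64:ℕ):ℤ) by norm_num, ← ZMod.intCast_zmod_eq_zero_iff_dvd]
    push_cast [apply_ite (Int.cast : ℤ → ZMod 64)]
    have h := key64' (p : ZMod 64) (by rw [ZMod.val_natCast]; omega)
    rw [ZMod.val_natCast] at h
    simp only [show (p % 64 % 4 = 3) ↔ (p % 4 = 3) from by omega,
        show (p % 64 % 8 = 5) ↔ (p % 8 = 5) from by omega,
        show (p % 64 % 8 = 7) ↔ (p % 8 = 7) from by omega] at h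
    have h640 : (640 : ZMod 64) = 0 := by decide
    have h576 : (576 : ZMod 64) = 0 := by decide
    rw [h640, h576]
    ring_nf
    ring_nf at h
    linear_combination h
  have hd9 : (9:ℤ) ∣ ((p : ℤ) - 1) * ((p : ℤ) ^ 2 - 35 * p + 346)
      - 180 * (if p % 4 = 3 then (1:ℤ) else 0)
      - 720 * (if p % 8 = 5 ∨ p % 8 = 7 then (1:ℤ) else 0)
      - 640 * (if p % 3 = 2 then (1:ℤ) else 0)
      - 576 * (if p % 5 = 4 then (1:ℤ) else 0) := by
    rw [show (9:ℤ) = ((9:ℕ):ℤ) by norm_num, ← ZMod.intCast_zmod_eq_zero_iff_dvd]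
    push_cast [apply_ite (Int.cast : ℤ → ZMod 9)]
    have h := key9' (p : ZMod 9) (by rw [ZMod.val_natCast]; omega)
    rw [ZMod.val_natCast] at h
    simp only [show (p % 9 % 3 = 2) ↔ (p % 3 = 2) from by omega] at h
    have h180 : (180 : ZMod 9) = 0 := by decide
    have h720 : (720 : ZMod 9) = 0 := by decide
    have h576 : (576 : ZMod 9) = 0 := by decide
    rw [h180, h720, h576]
    ring_nf
    ring_nf at h
    linear_combination h
  have hd5 : (5:ℤ) ∣ ((p : ℤ) - 1) * ((p : ℤ) ^ 2 - 35 * p + 346)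
      - 180 * (if p % 4 = 3 then (1:ℤ) else 0)
      - 720 * (if p % 8 = 5 ∨ p % 8 = 7 then (1:ℤ) else 0)
      - 640 * (if p % 3 = 2 then (1:ℤ) else 0)
      - 576 * (if p % 5 = 4 then (1:ℤ) else 0) := by
    rw [show (5:ℤ) = ((5:ℕ):ℤ) by norm_num, ← ZMod.intCast_zmod_eq_zero_iff_dvd]
    push_cast [apply_ite (Int.cast : ℤ → ZMod 5)]
    have h := key5' (p : ZMod 5) (by rw [ZMod.val_natCast]; omega)
    rw [ZMod.val_natCast] at h
    simp only [show (p % 5 % 5 = 4) ↔ (p % 5 = 4) from by omega] at h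
    have h180 : (180 : ZMod 5) = 0 := by decide
    have h720 : (720 : ZMod 5) = 0 := by decide
    have h640 : (640 : ZMod 5) = 0 := by decide
    rw [h180, h720, h640]
    ring_nf
    ring_nf at h
    linear_combination h
  set E : ℤ := ((p : ℤ) - 1) * ((p : ℤ) ^ 2 - 35 * p + 346)
      - 180 * (if p % 4 = 3 then (1:ℤ) else 0)
      - 720 * (if p % 8 = 5 ∨ p % 8 = 7 then (1:ℤ) else 0)
      - 640 * (if p % 3 = 2 then (1:ℤ) else 0)
      - 576 * (if p % 5 = 4 then (1:ℤ) else 0) with hE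
  have hdvd : (2880:ℤ) ∣ E := by omega
  refine ⟨hdvd, ?_⟩
  have hp7 : 7 ≤ p := by omega
  have hpZ : (7 : ℤ) ≤ (p : ℤ) := by exact_mod_cast hp7
  have hP : 0 < ((p : ℤ) - 1) * ((p : ℤ) ^ 2 - 35 * p + 346) := by
    have h1 : (0:ℤ) < (p:ℤ) - 1 := by linarith
    have h2 : (0:ℤ) < (p:ℤ) ^ 2 - 35 * p + 346 := by
      nlinarith [sq_nonneg (2*(p:ℤ) - 35)]
    positivity
  have hb : -2880 < E := by
    rw [hE]
    split_ifs <;> linarith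
  obtain ⟨k, hk⟩ := hdvd
  have hk0 : 0 ≤ k := by nlinarith
  rw [hk]
  positivity
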